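/- Let Γ(t), 0 ≤ t ≤ T, be a sufficiently smooth moving boundary in ℝ², σ a continuous density on the space-time boundary Γ_T, and δ > 0. For t ≥ 2δ, define the far-history function u_FH(x, t+δ) = S_FH[σ](x, t+δ) = ∫₀^{t−δ} ∫_{Γ(τ)} G(x−y, t+δ−τ) σ(y,τ) ds_y dτ. Then u_FH(x, t+δ) = ∫_{ℝ²} G(x−z, δ) [u_FH(z, t) + S_NH[σ](z, t)] dz for all x ∈ ℝ², where S_NH[σ](z,t) = ∫_{t−2δ}^{t−δ} ∫_{Γ(τ)} G(z−y, t−τ) σ(y,τ) ds_y dτ. -/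

import Mathlib

noncomputable section

open MeasureTheory Filter Topology

/-- The plane `ℝ²`. -/
abbrev E2 : Type := EuclideanSpace ℝ (Fin 2)

/-- The free-space heat kernel in two space dimensions,
`G(x,t) = e^{−‖x‖²/(4t)}/(4πt)`. -/
def heatKernel (x : E2) (t : ℝ) : ℝ :=
  Real.exp (-‖x‖ ^ 2 / (4 * t)) / (4 * Real.pi * t)

/-- A *sufficiently smooth moving boundary* in the plane: for every time `t`,
`Γ(t) = frontier (Ω t)` is the boundary of a bounded open domain `Ω t`; it is a
closed `C²` curve (hence with continuous curvature), parametrized by arc length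
by `γ t : ℝ → ℝ²` (periodic with period the length of the curve), jointly
continuous in space-time and evolving with a continuous velocity, with outward
unit normal `ν t y` at `y ∈ Γ(t)`. -/
structure SmoothMovingBoundary where
  /-- the moving domain -/
  Ω : ℝ → Set E2
  /-- arc-length parametrization of `Γ(t) = frontier (Ω t)` -/
  γ : ℝ → ℝ → E2
  /-- the length of the curve `Γ(t)` -/
  len : ℝ → ℝ
  /-- outward unit normal to `Γ(t)` -/
  ν : ℝ → E2 → E2
  isOpen : ∀ t, IsOpen (Ω t)
  bounded : ∀ t, Bornology.IsBounded (Ω t)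
  len_pos : ∀ t, 0 < len t
  len_cont : Continuous len
  periodic : ∀ t s, γ t (s + len t) = γ t s
  image_eq : ∀ t, frontier (Ω t) = Set.range (γ t)
  contDiff_space : ∀ t, ContDiff ℝ 2 (γ t)
  arclength : ∀ t s, ‖deriv (γ t) s‖ = 1
  joint_cont : Continuous (Function.uncurry γ)
  velocity_cont : Continuous fun p : ℝ × ℝ => deriv (fun u => γ u p.2) p.1
  normal_unit : ∀ t s, ‖ν t (γ t s)‖ = 1
  normal_orth : ∀ t s, inner ℝ (ν t (γ t s)) (deriv (γ t) s) = (0 : ℝ)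
  normal_outward : ∀ t s, ∀ᶠ ε in 𝓝[>] (0 : ℝ),
    γ t s + ε • ν t (γ t s) ∉ closure (Ω t)

namespace SmoothMovingBoundary

/-- The line integral `∫_{Γ(τ)} f(y) ds_y` with respect to arc length. -/
def curveIntegral (B : SmoothMovingBoundary) (τ : ℝ) (f : E2 → ℝ) : ℝ :=
  ∫ s in Set.Ioc 0 (B.len τ), f (B.γ τ s)

/-- The single layer heat potential
`S[σ](x,t) = ∫₀ᵗ ∫_{Γ(τ)} G(x−y,t−τ) σ(y,τ) ds_y dτ`. -/
def singleLayer (B : SmoothMovingBoundary) (σ : E2 → ℝ → ℝ) (x : E2) (t : ℝ) : ℝ :=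
  ∫ τ in Set.Ioc 0 t, B.curveIntegral τ fun y => heatKernel (x - y) (t - τ) * σ y τ

/-- The space-time boundary `Γ_T = ∏_{0}^{T} Γ(t)` viewed as a subset of `ℝ² × ℝ`. -/
def spaceTimeBoundary (B : SmoothMovingBoundary) (T : ℝ) : Set (E2 × ℝ) :=
  {p | p.2 ∈ Set.Icc 0 T ∧ p.1 ∈ frontier (B.Ω p.2)}

end SmoothMovingBoundary

/-- The kernel `∂/∂ν_y G(x−y,s) = ⟪ν_y, (x−y)/(2s)⟫ G(x−y,s)` of the double
layer heat potential, where `n` is the (outward) unit normal at `y`. -/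
def dlKernel (n : E2) (x y : E2) (s : ℝ) : ℝ :=
  ((inner ℝ n (x - y) : ℝ) / (2 * s)) * heatKernel (x - y) s

/-- The double layer heat potential
`D[μ](x,t) = ∫₀ᵗ ∫_{Γ(τ)} (∂/∂ν_y) G(x−y,t−τ) μ(y,τ) ds_y dτ`. -/
def SmoothMovingBoundary.doubleLayer (B : SmoothMovingBoundary) (μ : E2 → ℝ → ℝ)
    (x : E2) (t : ℝ) : ℝ :=
  ∫ τ in Set.Ioc 0 t, B.curveIntegral τ fun y => dlKernel (B.ν τ y) x y (t - τ) * μ y τ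

/-- A density which is continuous on the space-time boundary `Γ_T`. -/
def ContinuousDensity (B : SmoothMovingBoundary) (T : ℝ) (σ : E2 → ℝ → ℝ) : Prop :=
  ContinuousOn (fun p : E2 × ℝ => σ p.1 p.2) (B.spaceTimeBoundary T)

/-- The Laplacian `Δf(x) = ∑ᵢ ∂²f/∂xᵢ²` of a function on the plane. -/
def laplacian2 (f : E2 → ℝ) (x : E2) : ℝ :=
  ∑ i : Fin 2, fderiv ℝ (fun y => fderiv ℝ f y (EuclideanSpace.single i (1 : ℝ))) x
    (EuclideanSpace.single i (1 : ℝ))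

/-- The one-dimensional Hermite functions `h_n(x) = (−1)ⁿ (dⁿ/dxⁿ) e^{−x²}`. -/
def hermiteFun (n : ℕ) (x : ℝ) : ℝ :=
  (-1 : ℝ) ^ n * (deriv^[n] fun y : ℝ => Real.exp (-y ^ 2)) x

/-- Two-dimensional Hermite functions `h_α(x) = h_{α₁}(x₁) h_{α₂}(x₂)`. -/
def hermiteFun2 (α : ℕ × ℕ) (x : E2) : ℝ :=
  hermiteFun α.1 (x 0) * hermiteFun α.2 (x 1)

/-- The exponential integral of order 3/2, `E_{3/2}(x) = ∫₁^∞ e^{−xt} t^{−3/2} dt`. -/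
def expInt32 (x : ℝ) : ℝ :=
  ∫ u in Set.Ioi (1 : ℝ), Real.exp (-x * u) / u ^ ((3 : ℝ) / 2)

/-- The complementary error function `erfc(x) = (2/√π) ∫ₓ^∞ e^{−t²} dt`. -/
def erfc (x : ℝ) : ℝ :=
  2 / Real.sqrt Real.pi * ∫ u in Set.Ioi x, Real.exp (-u ^ 2)


/-!
The heat kernel is a semigroup, `∫ G(x − z, δ) G(z − y, s) dz = G(x − y, δ + s)`, by completing the
square in the Gaussian exponent. In arc-length coordinates `(τ, s)` of the space-time boundary,
the far- and near-history parts together form a single integral over `τ ∈ (0, t − δ]` of heat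
kernels `G(· − γ(τ, s), t − τ)` against the continuous density. There `t − τ ≥ δ`, so the kernels
are bounded and Fubini applies; the semigroup identity then turns each `G(·, t − τ)` into
`G(·, t + δ − τ)`.
-/

open Set

theorem mul_norm_sub_sq_add_mul_norm_sub_sq {V : Type*} [NormedAddCommGroup V]
    [InnerProductSpace ℝ V] {a b : ℝ} (hab : 0 < a + b) (x y z : V) :
    a * ‖x - z‖ ^ 2 + b * ‖z - y‖ ^ 2 =
      (a + b) * ‖z - (a / (a + b)) • x - (b / (a + b)) • y‖ ^ 2 +
        a * b / (a + b) * ‖x - y‖ ^ 2 := by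
  simp only [← real_inner_self_eq_norm_sq, inner_sub_left, inner_sub_right, real_inner_smul_left,
    real_inner_smul_right, real_inner_comm x z, real_inner_comm y z, real_inner_comm x y]
  field_simp
  ring

theorem integral_exp_neg_mul_norm_sq {b : ℝ} (hb : 0 < b) :
    ∫ v : E2, Real.exp (-b * ‖v‖ ^ 2) = Real.pi / b := by
  rw [GaussianFourier.integral_rexp_neg_mul_sq_norm hb, finrank_euclideanSpace_fin]
  norm_num

theorem integrable_exp_neg_mul_norm_sq {b : ℝ} (hb : 0 < b) :
    Integrable fun v : E2 => Real.exp (-b * ‖v‖ ^ 2) :=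
  .of_integral_ne_zero <| by rw [integral_exp_neg_mul_norm_sq hb]; positivity

@[fun_prop]
theorem Measurable.heatKernel {α : Type*} [MeasurableSpace α] {f : α → E2} {g : α → ℝ}
    (hf : Measurable f) (hg : Measurable g) : Measurable fun a => heatKernel (f a) (g a) := by
  unfold _root_.heatKernel
  fun_prop

theorem heatKernel_pos {t : ℝ} (ht : 0 < t) (x : E2) : 0 < heatKernel x t := by
  unfold heatKernel
  positivity

theorem heatKernel_le {t : ℝ} (ht : 0 < t) (x : E2) : heatKernel x t ≤ 1 / (4 * Real.pi * t) := by
  unfold heatKernel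
  gcongr
  rw [Real.exp_le_one_iff, neg_div, neg_nonpos]
  positivity

theorem heatKernel_eq_exp_mul {t : ℝ} (x : E2) :
    heatKernel x t = Real.exp (-(1 / (4 * t)) * ‖x‖ ^ 2) * (1 / (4 * Real.pi * t)) := by
  unfold heatKernel
  ring_nf

theorem integrable_heatKernel {t : ℝ} (ht : 0 < t) (x : E2) :
    Integrable fun z : E2 => heatKernel (x - z) t := by
  simp_rw [heatKernel_eq_exp_mul]
  exact ((integrable_comp_sub_left (fun w : E2 => Real.exp (-(1 / (4 * t)) * ‖w‖ ^ 2)) x).2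
    (integrable_exp_neg_mul_norm_sq (by positivity))).mul_const _

theorem integral_heatKernel_mul_heatKernel {s t : ℝ} (hs : 0 < s) (ht : 0 < t) (x y : E2) :
    ∫ z : E2, heatKernel (x - z) s * heatKernel (z - y) t = heatKernel (x - y) (s + t) := by
  have hab : 0 < 1 / (4 * s) + 1 / (4 * t) := by positivity
  set c : E2 := ((1 / (4 * s)) / (1 / (4 * s) + 1 / (4 * t))) • x +
    ((1 / (4 * t)) / (1 / (4 * s) + 1 / (4 * t))) • y
  have hsplit : ∀ z : E2, heatKernel (x - z) s * heatKernel (z - y) t =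
      Real.exp (-(1 / (4 * s) + 1 / (4 * t)) * ‖z - c‖ ^ 2) *
        (Real.exp (-(1 / (4 * (s + t))) * ‖x - y‖ ^ 2) *
          (1 / (4 * Real.pi * s) * (1 / (4 * Real.pi * t)))) := by
    intro z
    have := mul_norm_sub_sq_add_mul_norm_sub_sq hab x y z
    rw [heatKernel_eq_exp_mul, heatKernel_eq_exp_mul, mul_mul_mul_comm, ← Real.exp_add]
    conv_rhs => rw [← mul_assoc, ← Real.exp_add, sub_add_eq_sub_sub]
    congr 2
    field_simp at this ⊢
    linear_combination -this
  simp_rw [hsplit]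
  rw [integral_mul_const,
    integral_sub_right_eq_self (fun z : E2 => Real.exp (-(1 / (4 * s) + 1 / (4 * t)) * ‖z‖ ^ 2)) c,
    integral_exp_neg_mul_norm_sq hab, heatKernel_eq_exp_mul]
  field_simp
  ring

section Superposition

variable {P : Type*} [MeasurableSpace P] {ν : Measure P} {y : P → E2} {r w : P → ℝ}

theorem integrable_heatKernel_mul (hy : Measurable y) (hr : Measurable r) {δ : ℝ} (hδ : 0 < δ)
    (hrδ : ∀ᵐ p ∂ν, δ ≤ r p) (hw : Integrable w ν) (x : E2) :
    Integrable (fun p => heatKernel (x - y p) (r p) * w p) ν := by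
  refine hw.bdd_mul (c := 1 / (4 * Real.pi * δ))
    ((measurable_const.sub hy).heatKernel hr).aestronglyMeasurable ?_
  filter_upwards [hrδ] with p hp
  have hr0 : 0 < r p := hδ.trans_le hp
  rw [Real.norm_of_nonneg (heatKernel_pos hr0 _).le]
  exact (heatKernel_le hr0 _).trans (by gcongr)

variable [SFinite ν]

theorem integrable_prod_heatKernel_mul_heatKernel_mul (hy : Measurable y) (hr : Measurable r)
    (hr0 : ∀ᵐ p ∂ν, 0 < r p) (hw : Integrable w ν) {δ : ℝ} (hδ : 0 < δ) (x : E2) :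
    Integrable (fun q : E2 × P =>
      heatKernel (x - q.1) δ * (heatKernel (q.1 - y q.2) (r q.2) * w q.2)) (volume.prod ν) := by
  have hmeas : AEStronglyMeasurable (fun q : E2 × P => heatKernel (x - q.1) δ *
      (heatKernel (q.1 - y q.2) (r q.2) * w q.2)) (volume.prod ν) :=
    ((measurable_const.sub measurable_fst).heatKernel measurable_const).aestronglyMeasurable.mul
      (((measurable_fst.sub (hy.comp measurable_snd)).heatKernel
        (hr.comp measurable_snd)).aestronglyMeasurable.mul hw.1.comp_snd)
  rw [integrable_prod_iff' hmeas]
  constructor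
  · filter_upwards [hr0] with p hp
    simp_rw [← mul_assoc]
    refine Integrable.mul_const ?_ _
    refine (integrable_heatKernel hδ x).mul_bdd (c := 1 / (4 * Real.pi * r p))
      ((measurable_id.sub measurable_const).heatKernel measurable_const).aestronglyMeasurable ?_
    refine .of_forall fun z => ?_
    rw [Real.norm_of_nonneg (heatKernel_pos hp _).le]
    exact heatKernel_le hp _
  -- by the semigroup identity, the `z`-integral of the norm is `G(x - y p, δ + r p) * |w p|`
  · refine (integrable_heatKernel_mul hy (hr.const_add δ) hδ ?_ hw.norm x).congr ?_
    · filter_upwards [hr0] with p hp using by linarith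
    filter_upwards [hr0] with p hp
    simp only [norm_mul, Real.norm_of_nonneg (heatKernel_pos hδ _).le,
      Real.norm_of_nonneg (heatKernel_pos hp _).le, ← mul_assoc]
    rw [integral_mul_const, integral_heatKernel_mul_heatKernel hδ hp]

theorem integral_heatKernel_mul_integral_heatKernel_mul (hy : Measurable y) (hr : Measurable r)
    (hr0 : ∀ᵐ p ∂ν, 0 < r p) (hw : Integrable w ν) {δ : ℝ} (hδ : 0 < δ) (x : E2) :
    ∫ z, heatKernel (x - z) δ * ∫ p, heatKernel (z - y p) (r p) * w p ∂ν =
      ∫ p, heatKernel (x - y p) (δ + r p) * w p ∂ν := by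
  simp_rw [← integral_const_mul]
  rw [integral_integral_swap (integrable_prod_heatKernel_mul_heatKernel_mul hy hr hr0 hw hδ x)]
  refine integral_congr_ae ?_
  filter_upwards [hr0] with p hp
  simp_rw [← mul_assoc]
  rw [integral_mul_const, integral_heatKernel_mul_heatKernel hδ hp]

end Superposition

namespace SmoothMovingBoundary

variable (B : SmoothMovingBoundary)

/-- Arc-length coordinates `(τ, s)` of the part of the space-time boundary with `τ ∈ I`; the
point `(τ, s)` is mapped to `(B.γ τ s, τ)`. -/
def paramRegion (I : Set ℝ) : Set (ℝ × ℝ) :=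
  {p | p.1 ∈ I ∧ p.2 ∈ Ioc 0 (B.len p.1)}

theorem measurableSet_paramRegion {I : Set ℝ} (hI : MeasurableSet I) :
    MeasurableSet (B.paramRegion I) :=
  (measurable_fst hI).inter <| (measurableSet_lt measurable_const measurable_snd).inter
    (measurableSet_le measurable_snd (B.len_cont.measurable.comp measurable_fst))

theorem paramRegion_union (I J : Set ℝ) :
    B.paramRegion (I ∪ J) = B.paramRegion I ∪ B.paramRegion J := by
  ext p
  simp only [paramRegion, mem_union, mem_ofPred_eq, or_and_right]

theorem disjoint_paramRegion {I J : Set ℝ} (h : Disjoint I J) :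
    Disjoint (B.paramRegion I) (B.paramRegion J) :=
  (h.preimage Prod.fst).mono (fun _ hp => hp.1) (fun _ hp => hp.1)

theorem setIntegral_curveIntegral {I : Set ℝ} (hI : MeasurableSet I) {f : ℝ → E2 → ℝ}
    (hf : IntegrableOn (fun p : ℝ × ℝ => f p.1 (B.γ p.1 p.2)) (B.paramRegion I)) :
    ∫ τ in I, B.curveIntegral τ (f τ) = ∫ p in B.paramRegion I, f p.1 (B.γ p.1 p.2) := by
  have hR := B.measurableSet_paramRegion hI
  rw [← integral_indicator hR, Measure.volume_eq_prod ℝ ℝ,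
    integral_prod _ ((integrable_indicator_iff hR).2 hf), ← integral_indicator hI]
  congr 1 with τ
  by_cases hτ : τ ∈ I
  · rw [indicator_of_mem hτ, curveIntegral, ← integral_indicator measurableSet_Ioc]
    congr 1 with s
    simp [paramRegion, indicator, hτ]
  · simp [paramRegion, hτ]

theorem setIntegral_curveIntegral_add {a b c : ℝ} (hab : a ≤ b) (hbc : b ≤ c) {f : ℝ → E2 → ℝ}
    (hf : IntegrableOn (fun p : ℝ × ℝ => f p.1 (B.γ p.1 p.2)) (B.paramRegion (Ioc a c))) :
    (∫ τ in Ioc a b, B.curveIntegral τ (f τ)) + ∫ τ in Ioc b c, B.curveIntegral τ (f τ) =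
      ∫ p in B.paramRegion (Ioc a c), f p.1 (B.γ p.1 p.2) := by
  rw [← Ioc_union_Ioc_eq_Ioc hab hbc, B.paramRegion_union] at hf ⊢
  obtain ⟨hfab, hfbc⟩ := integrableOn_union.1 hf
  rw [B.setIntegral_curveIntegral measurableSet_Ioc hfab,
    B.setIntegral_curveIntegral measurableSet_Ioc hfbc,
    setIntegral_union (B.disjoint_paramRegion (Ioc_disjoint_Ioc_of_le le_rfl))
      (B.measurableSet_paramRegion measurableSet_Ioc) hfab hfbc]

end SmoothMovingBoundary

theorem ContinuousDensity.integrableOn_paramRegion {B : SmoothMovingBoundary} {T : ℝ}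
    {σ : E2 → ℝ → ℝ} (hσ : ContinuousDensity B T σ) {I : Set ℝ} (hI : I ⊆ Icc 0 T) :
    IntegrableOn (fun p : ℝ × ℝ => σ (B.γ p.1 p.2) p.1) (B.paramRegion I) := by
  obtain ⟨L, hL⟩ := ((isCompact_Icc (a := 0) (b := T)).image B.len_cont).bddAbove
  have hcont : ContinuousOn (fun p : ℝ × ℝ => σ (B.γ p.1 p.2) p.1) (Icc 0 T ×ˢ Icc 0 L) :=
    hσ.comp (B.joint_cont.prodMk continuous_fst).continuousOn fun p hp =>
      ⟨hp.1, by rw [B.image_eq]; exact mem_range_self _⟩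
  refine (hcont.integrableOn_compact (isCompact_Icc.prod isCompact_Icc)).mono_set ?_
  rintro p ⟨hτ, hs⟩
  exact ⟨hI hτ, hs.1.le, hs.2.trans (hL (mem_image_of_mem _ (hI hτ)))⟩

theorem singleLayer_far_history_recurrence
    (T : ℝ) (B : SmoothMovingBoundary)
    (σ : E2 → ℝ → ℝ) (hσ : ContinuousDensity B T σ)
    (δ t : ℝ) (hδ : 0 < δ) (ht : 2 * δ ≤ t) (htT : t ≤ T) :
    ∀ x : E2,
      (∫ τ in Set.Ioc 0 (t - δ), B.curveIntegral τ fun y =>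
        heatKernel (x - y) (t + δ - τ) * σ y τ) =
      ∫ z : E2, heatKernel (x - z) δ *
        ((∫ τ in Set.Ioc 0 (t - 2 * δ), B.curveIntegral τ fun y =>
            heatKernel (z - y) (t - τ) * σ y τ) +
          ∫ τ in Set.Ioc (t - 2 * δ) (t - δ), B.curveIntegral τ fun y =>
            heatKernel (z - y) (t - τ) * σ y τ) := by
  intro x
  set R := B.paramRegion (Ioc 0 (t - δ))
  have hσR : IntegrableOn (fun p : ℝ × ℝ => σ (B.γ p.1 p.2) p.1) R :=
    hσ.integrableOn_paramRegion fun τ hτ => ⟨hτ.1.le, by linarith [hτ.2]⟩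
  have hγ : Measurable fun p : ℝ × ℝ => B.γ p.1 p.2 := B.joint_cont.measurable
  have hrδ : ∀ᵐ p ∂volume.restrict R, δ ≤ t - p.1 :=
    ae_restrict_of_forall_mem (B.measurableSet_paramRegion measurableSet_Ioc) fun p hp => by
      linarith [hp.1.2]
  have hr0 : ∀ᵐ p ∂volume.restrict R, 0 < t - p.1 := hrδ.mono fun _ hp => hδ.trans_le hp
  have hLHS : IntegrableOn
      (fun p : ℝ × ℝ => heatKernel (x - B.γ p.1 p.2) (t + δ - p.1) * σ (B.γ p.1 p.2) p.1) R :=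
    integrable_heatKernel_mul hγ (measurable_fst.const_sub _) hδ
      (hrδ.mono fun p hp => by linarith) hσR x
  have hprod := integrable_prod_heatKernel_mul_heatKernel_mul hγ (measurable_fst.const_sub t)
    hr0 hσR hδ x
  calc _ = ∫ p in R, heatKernel (x - B.γ p.1 p.2) (δ + (t - p.1)) * σ (B.γ p.1 p.2) p.1 := by
        simp only [add_sub_assoc', add_comm δ t]
        exact B.setIntegral_curveIntegral measurableSet_Ioc hLHS
    _ = _ := (integral_heatKernel_mul_integral_heatKernel_mul hγ (measurable_fst.const_sub t)
        hr0 hσR hδ x).symm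
    _ = _ := by
      refine integral_congr_ae (hprod.prod_right_ae.mono fun z hz => ?_)
      dsimp only
      rw [B.setIntegral_curveIntegral_add (by linarith) (by linarith)
        ((integrable_const_mul_iff (heatKernel_pos hδ (x - z)).ne'.isUnit _).1 hz)]

end
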